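/- Data processing inequality and self-equitability: let h : ℝ^p → ℝ^q be Borel measurable with α(h(X)) = α(X). Then (i) Λ(Y | h∘X) ≤ Λ(Y|X); and (ii) if in addition Y and X are conditionally independent given h(X), then Λ(Y | h∘X) = Λ(Y|X). -/

import Mathlib

open MeasureTheory ProbabilityTheory Set Filter Topology

/-- The (nonparametric) relative effect `Ψ(μ, ν) = ∫ μ((-∞,y)) + (1/2) μ({y}) dν(y)`. -/
noncomputable def relEffect (μ ν : Measure ℝ) : ℝ :=
  ∫ y, ((μ (Set.Iio y)).toReal + (1 / 2) * (μ {y}).toReal) ∂ν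

/-- `α(μ) = 1 - ∫ μ({x}) dμ(x) = 1 - P(X = X*)`, the non-discrete mass of `μ`. -/
noncomputable def alphaCoeff {E : Type*} [MeasurableSpace E] (μ : Measure E) : ℝ :=
  1 - ∫ x, (μ {x}).toReal ∂μ

/-- The coefficient of separation `Λ(Y|X)`. -/
noncomputable def sepCoeff {Ω E : Type*} [MeasurableSpace Ω] [MeasurableSpace E]
    (P : Measure Ω) [IsFiniteMeasure P] (Y : Ω → ℝ) (X : Ω → E) : ℝ :=
  (alphaCoeff (P.map X))⁻¹ *
    ∫ x : E × E,
      (relEffect (condDistrib Y X P x.1) (condDistrib Y X P x.2)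
        - relEffect (condDistrib Y X P x.2) (condDistrib Y X P x.1)) ^ 2
      ∂((P.map X).prod (P.map X))

/-- A random variable is non-degenerate if it is not a.s. constant. -/
def Nondegenerate {Ω α : Type*} [MeasurableSpace Ω] (P : Measure Ω) (Z : Ω → α) : Prop :=
  ¬ ∃ c, ∀ᵐ ω ∂P, Z ω = c

/-! Write `D_W(w₁, w₂) := Ψ(κ_W w₁, κ_W w₂) - Ψ(κ_W w₂, κ_W w₁)` for `κ_W` the conditional
distribution of `Y` given `W`. Then `D_W(w₁, w₂) = E[sign(B - A)]` for independent `A ~ κ_W w₁`,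
`B ~ κ_W w₂`, and hence `∫ φ · D_W d(μ_W ⊗ μ_W) = E[φ(W₁, W₂) sign(Y₂ - Y₁)]` for every bounded
`φ`, where `(W₁, Y₁)`, `(W₂, Y₂)` are independent copies of `(W, Y)`. Applying this to `W = X`,
`φ = D_{h∘X} ∘ (h × h)` and to `W = h ∘ X`, `φ = D_{h∘X}` gives
`⟨D_{h∘X} ∘ (h × h), D_X⟩ = ‖D_{h∘X} ∘ (h × h)‖²` in `L²(μ_X ⊗ μ_X)`, hence
`‖D_{h∘X}‖ ≤ ‖D_X‖`: this is (i), as `α(h(X)) = α(X)`. Under conditional independence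
`κ_X(x) = κ_{h∘X}(h(x))` for `μ_X`-a.e. `x`, so `D_X = D_{h∘X} ∘ (h × h)` a.e., which is (ii). -/

lemma norm_integral_le_one_of_norm_le_one {α : Type*} [MeasurableSpace α] {μ : Measure α}
    [IsProbabilityMeasure μ] {f : α → ℝ} (hf : ∀ x, ‖f x‖ ≤ 1) : ‖∫ x, f x ∂μ‖ ≤ 1 := by
  simpa using norm_integral_le_of_norm_le_const (μ := μ) (ae_of_all _ hf)

lemma integral_prod_map_map {α β : Type*} [MeasurableSpace α] [MeasurableSpace β] (ν : Measure α)
    [SFinite ν] {g : α → β} (hg : Measurable g) {f : β × β → ℝ} (hf : Measurable f) :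
    ∫ z, f z ∂((ν.map g).prod (ν.map g)) = ∫ z, f (g z.1, g z.2) ∂(ν.prod ν) := by
  rw [Measure.map_prod_map _ _ hg hg,
    integral_map (hg.prodMap hg).aemeasurable hf.aestronglyMeasurable]
  rfl

lemma integral_sq_le_of_integral_mul_eq {α : Type*} [MeasurableSpace α] {μ : Measure α}
    {f g : α → ℝ} (hf : MemLp f 2 μ) (hg : MemLp g 2 μ)
    (hfg : ∫ x, f x * g x ∂μ = ∫ x, f x ^ 2 ∂μ) : ∫ x, f x ^ 2 ∂μ ≤ ∫ x, g x ^ 2 ∂μ := by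
  have h : ∫ x, 2 * (f x * g x) ∂μ ≤ ∫ x, (f x ^ 2 + g x ^ 2) ∂μ :=
    integral_mono ((hf.integrable_mul hg).const_mul 2) (hf.integrable_sq.add hg.integrable_sq)
      fun x => (two_mul_le_add_sq (f x) (g x)).trans_eq' (mul_assoc _ _ _)
  rw [integral_const_mul, integral_add hf.integrable_sq hg.integrable_sq, hfg] at h
  linarith

lemma MeasureTheory.Measure.map_prodMap_compProd_map {β γ δ : Type*} [MeasurableSpace β]
    [MeasurableSpace γ] [MeasurableSpace δ] (ν : Measure β) [SFinite ν] (η : Kernel γ δ)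
    [IsSFiniteKernel η]
    {e : β → γ} {g : γ → β} (he : Measurable e) (hg : Measurable g)
    (hge : Function.LeftInverse g e) :
    ((ν.map e) ⊗ₘ η).map (Prod.map g id) = ν ⊗ₘ η.comap e he := by
  ext s hs
  rw [Measure.map_apply (hg.prodMap measurable_id) hs,
    Measure.compProd_apply ((hg.prodMap measurable_id) hs), Measure.compProd_apply hs,
    lintegral_map (Kernel.measurable_kernel_prodMk_left ((hg.prodMap measurable_id) hs)) he]
  simp [Set.preimage, hge _]

@[fun_prop]
lemma Real.measurable_sign : Measurable Real.sign :=
  Measurable.ite measurableSet_Iio measurable_const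
    (Measurable.ite measurableSet_Ioi measurable_const measurable_const)

lemma Real.norm_sign_le_one (r : ℝ) : ‖Real.sign r‖ ≤ 1 := by
  rcases Real.sign_apply_eq r with h | h | h <;> simp [h]

lemma Real.sign_sub_eq_indicator (a b : ℝ) :
    Real.sign (b - a) = 2 * (Iio b).indicator 1 a + ({b} : Set ℝ).indicator 1 a - 1 := by
  rcases lt_trichotomy a b with h | rfl | h
  · simp [Real.sign_of_pos (sub_pos.2 h), h, h.ne]
    norm_num
  · simp
  · simp [Real.sign_of_neg (sub_neg.2 h), h.not_gt, h.ne']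

section RelEffect

variable (μ ν : Measure ℝ)

lemma integrable_sign_sub [IsFiniteMeasure μ] [IsFiniteMeasure ν] :
    Integrable (fun p : ℝ × ℝ => Real.sign (p.1 - p.2)) (μ.prod ν) :=
  .of_bound (Measurable.aestronglyMeasurable (by fun_prop)) 1
    (ae_of_all _ fun _ => Real.norm_sign_le_one _)

lemma integral_sign_sub [IsProbabilityMeasure μ] (b : ℝ) :
    ∫ a, Real.sign (b - a) ∂μ = 2 * μ.real (Iio b) + μ.real {b} - 1 := by
  simp_rw [Real.sign_sub_eq_indicator]
  have hIio : Integrable ((Iio b).indicator (1 : ℝ → ℝ)) μ :=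
    (integrable_const 1).indicator measurableSet_Iio
  have hb : Integrable (({b} : Set ℝ).indicator (1 : ℝ → ℝ)) μ :=
    (integrable_const 1).indicator (measurableSet_singleton b)
  rw [integral_sub _ (integrable_const 1), integral_add (hIio.const_mul 2) hb,
    integral_const_mul, integral_indicator_one measurableSet_Iio,
    integral_indicator_one (measurableSet_singleton b)]
  · simp
  · exact (hIio.const_mul 2).add hb

lemma relEffect_eq_integral_sign [IsProbabilityMeasure μ] [IsProbabilityMeasure ν] :
    relEffect μ ν = (1 + ∫ b, ∫ a, Real.sign (b - a) ∂μ ∂ν) / 2 := by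
  have hpt (b : ℝ) : (μ (Iio b)).toReal + 1 / 2 * (μ {b}).toReal
      = (1 + ∫ a, Real.sign (b - a) ∂μ) / 2 := by
    rw [integral_sign_sub, measureReal_def, measureReal_def]
    ring
  rw [relEffect]
  simp_rw [hpt]
  rw [integral_div, integral_add (integrable_const 1) (integrable_sign_sub ν μ).integral_prod_left]
  simp

lemma relEffect_sub_relEffect [IsProbabilityMeasure μ] [IsProbabilityMeasure ν] :
    relEffect μ ν - relEffect ν μ = ∫ b, ∫ a, Real.sign (b - a) ∂μ ∂ν := by
  have hanti : ∫ a, ∫ b, Real.sign (a - b) ∂ν ∂μ = -∫ b, ∫ a, Real.sign (b - a) ∂μ ∂ν := by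
    rw [integral_integral_swap (integrable_sign_sub μ ν), ← integral_neg]
    refine integral_congr_ae (ae_of_all _ fun b => ?_)
    dsimp only
    rw [← integral_neg]
    simp_rw [← Real.sign_neg, neg_sub]
  rw [relEffect_eq_integral_sign μ ν, relEffect_eq_integral_sign ν μ, hanti]
  ring

end RelEffect

/-- The integrand of `sepCoeff P Y X` is `skewEffect (condDistrib Y X P) ^ 2`. -/
noncomputable def skewEffect {F : Type*} [MeasurableSpace F] (κ : Kernel F ℝ) (z : F × F) : ℝ :=
  relEffect (κ z.1) (κ z.2) - relEffect (κ z.2) (κ z.1)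

section SkewEffect

variable {F : Type*} [MeasurableSpace F] (κ : Kernel F ℝ) [IsMarkovKernel κ]

lemma skewEffect_eq_integral_sign (z : F × F) :
    skewEffect κ z = ∫ b, ∫ a, Real.sign (b - a) ∂(κ z.1) ∂(κ z.2) :=
  relEffect_sub_relEffect _ _

lemma norm_skewEffect_le_one (z : F × F) : ‖skewEffect κ z‖ ≤ 1 := by
  rw [skewEffect_eq_integral_sign]
  exact norm_integral_le_one_of_norm_le_one fun b =>
    norm_integral_le_one_of_norm_le_one fun a => Real.norm_sign_le_one _

lemma stronglyMeasurable_skewEffect : StronglyMeasurable (skewEffect κ) := by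
  have hinner : StronglyMeasurable fun q : F × ℝ => ∫ a, Real.sign (q.2 - a) ∂(κ q.1) :=
    StronglyMeasurable.integral_kernel_prod_right' (κ := κ.comap Prod.fst measurable_fst)
      (f := fun p => Real.sign (p.1.2 - p.2)) (Measurable.stronglyMeasurable (by fun_prop))
  have houter := StronglyMeasurable.integral_kernel_prod_right'
    (κ := κ.comap Prod.snd measurable_snd)
    (f := fun p : (F × F) × ℝ => ∫ a, Real.sign (p.2 - a) ∂(κ p.1.1))
    (hinner.comp_measurable (measurable_fst.fst.prodMk measurable_snd))
  exact (funext (skewEffect_eq_integral_sign κ)).symm ▸ houter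

lemma integral_prod_compProd_mul_sign (μ : Measure F) [IsFiniteMeasure μ] {φ : F × F → ℝ}
    (hφ : Measurable φ) {C : ℝ} (hφC : ∀ z, ‖φ z‖ ≤ C) :
    ∫ pq, φ (pq.1.1, pq.2.1) * Real.sign (pq.2.2 - pq.1.2) ∂((μ ⊗ₘ κ).prod (μ ⊗ₘ κ)) =
      ∫ z, φ z * skewEffect κ z ∂(μ.prod μ) := by
  set ρ := μ ⊗ₘ κ
  have hbound (z : F × F) (r : ℝ) : ‖φ z * Real.sign r‖ ≤ C * 1 :=
    norm_mul_le_of_le (hφC z) (Real.norm_sign_le_one r)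
  have hΨ : Integrable (fun pq : (F × ℝ) × (F × ℝ) =>
      φ (pq.1.1, pq.2.1) * Real.sign (pq.2.2 - pq.1.2)) (ρ.prod ρ) :=
    .of_bound (Measurable.aestronglyMeasurable (by fun_prop)) _ (ae_of_all _ fun _ => hbound _ _)
  have hφskew : Integrable (fun z => φ z * skewEffect κ z) (μ.prod μ) :=
    .of_bound (hφ.mul (stronglyMeasurable_skewEffect κ).measurable).aestronglyMeasurable (C * 1)
      (ae_of_all _ fun z => norm_mul_le_of_le (hφC z) (norm_skewEffect_le_one κ z))
  have hinner (x : F) : ∫ a, ∫ q, φ (x, q.1) * Real.sign (q.2 - a) ∂ρ ∂(κ x) =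
      ∫ x', φ (x, x') * skewEffect κ (x, x') ∂μ := by
    have hsignx : StronglyMeasurable fun b => ∫ a, Real.sign (b - a) ∂(κ x) :=
      StronglyMeasurable.integral_prod_right' (f := fun p : ℝ × ℝ => Real.sign (p.1 - p.2))
        (Measurable.stronglyMeasurable (by fun_prop))
    have hmid : Integrable (fun q : F × ℝ => φ (x, q.1) * ∫ a, Real.sign (q.2 - a) ∂(κ x)) ρ :=
      .of_bound ((hφ.comp (measurable_const.prodMk measurable_fst)).stronglyMeasurable.mul
          (hsignx.comp_measurable measurable_snd)).aestronglyMeasurable _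
        (ae_of_all _ fun _ => norm_mul_le_of_le (hφC _)
          (norm_integral_le_one_of_norm_le_one fun _ => Real.norm_sign_le_one _))
    calc ∫ a, ∫ q, φ (x, q.1) * Real.sign (q.2 - a) ∂ρ ∂(κ x)
        = ∫ q, ∫ a, φ (x, q.1) * Real.sign (q.2 - a) ∂(κ x) ∂ρ :=
          integral_integral_swap (.of_bound (Measurable.aestronglyMeasurable (by fun_prop)) _
            (ae_of_all _ fun _ => hbound _ _))
      _ = ∫ q, φ (x, q.1) * ∫ a, Real.sign (q.2 - a) ∂(κ x) ∂ρ := by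
          simp_rw [integral_const_mul]
      _ = ∫ x', ∫ b, φ (x, x') * ∫ a, Real.sign (b - a) ∂(κ x) ∂(κ x') ∂μ :=
          Measure.integral_compProd hmid
      _ = ∫ x', φ (x, x') * skewEffect κ (x, x') ∂μ := by
          simp_rw [integral_const_mul, skewEffect_eq_integral_sign]
  calc ∫ pq, φ (pq.1.1, pq.2.1) * Real.sign (pq.2.2 - pq.1.2) ∂(ρ.prod ρ)
      = ∫ p, ∫ q, φ (p.1, q.1) * Real.sign (q.2 - p.2) ∂ρ ∂ρ := integral_prod _ hΨ
    _ = ∫ x, ∫ a, ∫ q, φ (x, q.1) * Real.sign (q.2 - a) ∂ρ ∂(κ x) ∂μ :=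
        Measure.integral_compProd hΨ.integral_prod_left
    _ = ∫ x, ∫ x', φ (x, x') * skewEffect κ (x, x') ∂μ ∂μ := by simp_rw [hinner]
    _ = ∫ z, φ z * skewEffect κ z ∂(μ.prod μ) := (integral_prod _ hφskew).symm

end SkewEffect

section CondDistrib

variable {Ω β γ : Type*} [MeasurableSpace Ω] [MeasurableSpace β] [MeasurableSpace γ]
  (P : Measure Ω) [IsFiniteMeasure P] {Y : Ω → ℝ} {X : Ω → β} {h : β → γ}

lemma integral_mul_skewEffect_condDistrib (hY : Measurable Y) (hX : Measurable X)
    {φ : β × β → ℝ} (hφ : Measurable φ) {C : ℝ} (hφC : ∀ z, ‖φ z‖ ≤ C) :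
    ∫ z, φ z * skewEffect (condDistrib Y X P) z ∂((P.map X).prod (P.map X)) =
      ∫ ω, φ (X ω.1, X ω.2) * Real.sign (Y ω.2 - Y ω.1) ∂(P.prod P) := by
  rw [← integral_prod_compProd_mul_sign _ _ hφ hφC, compProd_map_condDistrib hY.aemeasurable,
    integral_prod_map_map P (hX.prodMk hY) (by fun_prop)]

lemma integral_skewEffect_sq_comp_le (hY : Measurable Y) (hX : Measurable X)
    (hh : Measurable h) :
    ∫ z, skewEffect (condDistrib Y (h ∘ X) P) z ^ 2 ∂((P.map (h ∘ X)).prod (P.map (h ∘ X))) ≤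
      ∫ z, skewEffect (condDistrib Y X P) z ^ 2 ∂((P.map X).prod (P.map X)) := by
  set κ := condDistrib Y (h ∘ X) P
  have hκ := (stronglyMeasurable_skewEffect κ).measurable
  have hκh : Measurable fun z : β × β => skewEffect κ (h z.1, h z.2) :=
    hκ.comp (hh.prodMap hh)
  have hsq : ∫ z, skewEffect κ z ^ 2 ∂((P.map (h ∘ X)).prod (P.map (h ∘ X))) =
      ∫ z, skewEffect κ (h z.1, h z.2) ^ 2 ∂((P.map X).prod (P.map X)) := by
    rw [← Measure.map_map hh hX, integral_prod_map_map _ hh (hκ.pow_const 2)]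
  have hcross : ∫ z, skewEffect κ (h z.1, h z.2) * skewEffect (condDistrib Y X P) z
        ∂((P.map X).prod (P.map X)) =
      ∫ z, skewEffect κ z * skewEffect κ z ∂((P.map (h ∘ X)).prod (P.map (h ∘ X))) := by
    rw [integral_mul_skewEffect_condDistrib P hY hX hκh (fun _ => norm_skewEffect_le_one κ _),
      integral_mul_skewEffect_condDistrib P hY (hh.comp hX) hκ (norm_skewEffect_le_one κ)]
    rfl
  have hL2 {f : β × β → ℝ} (hf : Measurable f) (hf1 : ∀ z, ‖f z‖ ≤ 1) :
      MemLp f 2 ((P.map X).prod (P.map X)) :=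
    .of_bound hf.aestronglyMeasurable 1 (ae_of_all _ hf1)
  rw [hsq]
  refine integral_sq_le_of_integral_mul_eq (hL2 hκh fun _ => norm_skewEffect_le_one κ _)
    (hL2 (stronglyMeasurable_skewEffect _).measurable (norm_skewEffect_le_one _)) ?_
  rw [hcross, ← hsq]
  simp_rw [sq]

variable [StandardBorelSpace Ω] [StandardBorelSpace β] [Nonempty β]

lemma condDistrib_ae_eq_comp_of_condIndepFun (hY : Measurable Y) (hX : Measurable X)
    (hh : Measurable h)
    (hci : CondIndepFun (MeasurableSpace.comap (h ∘ X) inferInstance) (hh.comp hX).comap_le Y X P) :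
    ∀ᵐ ω ∂P, condDistrib Y X P (X ω) = condDistrib Y (h ∘ X) P (h (X ω)) := by
  set κ := condDistrib Y (h ∘ X) P
  have he : Measurable fun x => (h x, x) := hh.prodMk measurable_id
  have hjoint : P.map (fun ω => (((h ∘ X) ω, X ω), Y ω)) =
      P.map (fun ω => ((h ∘ X) ω, X ω)) ⊗ₘ κ.prodMkRight β :=
    (condDistrib_ae_eq_iff_measure_eq_compProd _ hY.aemeasurable _).1
      ((condIndepFun_iff_condDistrib_prod_ae_eq_prodMkRight hY hX (hh.comp hX)).1 hci.symm)
  -- Given `(h ∘ X, X)`, `Y` only depends on `h ∘ X`; then forget the redundant coordinate.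
  have hXY : P.map (fun ω => (X ω, Y ω)) = P.map X ⊗ₘ (κ.prodMkRight β).comap _ he := by
    calc P.map (fun ω => (X ω, Y ω))
        = (P.map (fun ω => (((h ∘ X) ω, X ω), Y ω))).map (Prod.map Prod.snd id) := by
          rw [Measure.map_map (by fun_prop) (by fun_prop)]
          rfl
      _ = ((P.map X).map (fun x => (h x, x)) ⊗ₘ κ.prodMkRight β).map (Prod.map Prod.snd id) := by
          rw [hjoint, Measure.map_map he hX]
          rfl
      _ = P.map X ⊗ₘ (κ.prodMkRight β).comap _ he :=
          Measure.map_prodMap_compProd_map _ _ he measurable_snd fun _ => rfl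
  exact ae_of_ae_map hX.aemeasurable
    (condDistrib_ae_eq_of_measure_eq_compProd X hY.aemeasurable hXY)

lemma integral_skewEffect_sq_comp_eq (hY : Measurable Y) (hX : Measurable X) (hh : Measurable h)
    (hci : CondIndepFun (MeasurableSpace.comap (h ∘ X) inferInstance) (hh.comp hX).comap_le Y X P) :
    ∫ z, skewEffect (condDistrib Y (h ∘ X) P) z ^ 2 ∂((P.map (h ∘ X)).prod (P.map (h ∘ X))) =
      ∫ z, skewEffect (condDistrib Y X P) z ^ 2 ∂((P.map X).prod (P.map X)) := by
  have hae := condDistrib_ae_eq_comp_of_condIndepFun P hY hX hh hci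
  rw [integral_prod_map_map P (hh.comp hX)
      ((stronglyMeasurable_skewEffect _).measurable.pow_const 2),
    integral_prod_map_map P hX ((stronglyMeasurable_skewEffect _).measurable.pow_const 2)]
  refine integral_congr_ae ?_
  filter_upwards [Measure.quasiMeasurePreserving_fst.ae hae,
    Measure.quasiMeasurePreserving_snd.ae hae] with ω h1 h2
  simp only [skewEffect, Function.comp_apply, h1, h2]

end CondDistrib

lemma alphaCoeff_nonneg {E : Type*} [MeasurableSpace E] (μ : Measure E) [IsProbabilityMeasure μ] :
    0 ≤ alphaCoeff μ := by
  rw [alphaCoeff, sub_nonneg]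
  exact (le_abs_self _).trans (norm_integral_le_one_of_norm_le_one fun x => by
    simpa [measureReal_def] using measureReal_le_one (μ := μ) (s := {x}))

theorem sepCoeff_data_processing_general
    {Ω : Type*} [MeasurableSpace Ω] [StandardBorelSpace Ω]
    {p q : ℕ}
    (P : Measure Ω) [IsProbabilityMeasure P]
    (X : Ω → (Fin p → ℝ)) (Y : Ω → ℝ)
    (hX : Measurable X) (hY : Measurable Y)
    (h : (Fin p → ℝ) → (Fin q → ℝ)) (hh : Measurable h)
    (hα : alphaCoeff (P.map (h ∘ X)) = alphaCoeff (P.map X)) :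
    sepCoeff P Y (h ∘ X) ≤ sepCoeff P Y X
    ∧ (CondIndepFun (MeasurableSpace.comap (h ∘ X) inferInstance) (hh.comp hX).comap_le Y X P →
        sepCoeff P Y (h ∘ X) = sepCoeff P Y X) := by
  have : IsProbabilityMeasure (P.map X) := Measure.isProbabilityMeasure_map hX.aemeasurable
  rw [sepCoeff, sepCoeff, hα]
  exact ⟨mul_le_mul_of_nonneg_left (integral_skewEffect_sq_comp_le P hY hX hh)
      (inv_nonneg.2 (alphaCoeff_nonneg _)),
    fun hci => congrArg _ (integral_skewEffect_sq_comp_eq P hY hX hh hci)⟩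

/-- Data processing inequality and self-equitability:
if `α(h(X)) = α(X)` then `Λ(Y|h∘X) ≤ Λ(Y|X)`, with equality whenever `Y` and `X`
are conditionally independent given `h(X)`. -/
theorem sepCoeff_data_processing
    {Ω : Type*} [MeasurableSpace Ω] [StandardBorelSpace Ω] [Nonempty Ω]
    {p q : ℕ} (hp : 1 ≤ p)
    (P : Measure Ω) [IsProbabilityMeasure P]
    (X : Ω → (Fin p → ℝ)) (Y : Ω → ℝ)
    (hX : Measurable X) (hY : Measurable Y)
    (hXnd : ∃ k, Nondegenerate P fun ω => X ω k)
    (hYnd : Nondegenerate P Y)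
    (h : (Fin p → ℝ) → (Fin q → ℝ)) (hh : Measurable h)
    (hα : alphaCoeff (P.map (h ∘ X)) = alphaCoeff (P.map X)) :
    sepCoeff P Y (h ∘ X) ≤ sepCoeff P Y X
    ∧ (CondIndepFun (MeasurableSpace.comap (h ∘ X) inferInstance) (hh.comp hX).comap_le Y X P →
        sepCoeff P Y (h ∘ X) = sepCoeff P Y X) :=
  sepCoeff_data_processing_general P X Y hX hY h hh hα
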